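/- Let ρ^ε be a Borel probability measure on 𝒳 with finite second moment and f ∈ L²(ρ) ∩ L²(ρ^ε). Let μ† ∈ M(Ω) satisfy L_ρ(f − Kμ†) = 0 on Ω and let ν† ∈ M(Ω) satisfy L_{ρ^ε}(f − Kν†) = 0 on Ω. Then for every ν ∈ M(Ω): ∫_Ω L_{ρ^ε}(f − Kν) d(ν − μ†) ≤ ¼‖f − Kμ†‖²_{L²(ρ^ε)}, and also ∫_Ω L_{ρ^ε}(f − Kν) d(ν − μ†) ≤ ¼‖Kν† − Kμ†‖²_{L²(ρ^ε)}. -/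

import Mathlib

open MeasureTheory RealInnerProductSpace

noncomputable section

/-- Integral of a real function against a signed measure, via the Jordan decomposition. -/
def sInt {α : Type*} [MeasurableSpace α] (μ : SignedMeasure α) (g : α → ℝ) : ℝ :=
  (∫ w, g w ∂μ.toJordanDecomposition.posPart) - ∫ w, g w ∂μ.toJordanDecomposition.negPart

/-- Total variation norm of a signed measure. -/
def tvNorm {α : Type*} [MeasurableSpace α] (μ : SignedMeasure α) : ℝ :=
  (μ.totalVariation Set.univ).toReal

/-- Input space ℝ^d. -/
abbrev Ed (d : ℕ) := EuclideanSpace ℝ (Fin d)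

/-- Parameter space ℝ^d × ℝ. -/
abbrev Pd (d : ℕ) := EuclideanSpace ℝ (Fin d) × ℝ

/-- The weight V(a,b) = 1 + ‖a‖ + |b|. -/
def Vw {d : ℕ} (w : Pd d) : ℝ := 1 + ‖w.1‖ + |w.2|

/-- The Barron-norm functional J(μ) = ∫ V d|μ|. -/
def Jfun {d : ℕ} {Ω : Set (Pd d)} (μ : SignedMeasure ↥Ω) : ℝ :=
  ∫ w, Vw (w : Pd d) ∂μ.totalVariation

/-- (Kμ)(x) = ∫_Ω σ(aᵀx + b) dμ(a,b). -/
def Kop {d : ℕ} (σ : ℝ → ℝ) {Ω : Set (Pd d)} (μ : SignedMeasure ↥Ω) (x : Ed d) : ℝ :=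
  sInt μ (fun w => σ (⟪(w : Pd d).1, x⟫ + (w : Pd d).2))

/-- (L_ρ φ)(a,b) = ∫ φ(x) σ(aᵀx + b) dρ(x). -/
def Lop {d : ℕ} (σ : ℝ → ℝ) (ρ : Measure (Ed d)) (φ : Ed d → ℝ) (w : Pd d) : ℝ :=
  ∫ x, φ x * σ (⟪w.1, x⟫ + w.2) ∂ρ

/-- Squared L²(ρ) norm. -/
def L2sq {d : ℕ} (ρ : Measure (Ed d)) (g : Ed d → ℝ) : ℝ := ∫ x, g x ^ 2 ∂ρ

/-- L²(ρ) norm. -/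
def L2norm {d : ℕ} (ρ : Measure (Ed d)) (g : Ed d → ℝ) : ℝ := Real.sqrt (L2sq ρ g)

/-- The loss R_f(μ) = ½‖Kμ − f‖²_{L²(ρ)}. -/
def Rf {d : ℕ} (σ : ℝ → ℝ) {Ω : Set (Pd d)} (ρ : Measure (Ed d)) (f : Ed d → ℝ)
    (μ : SignedMeasure ↥Ω) : ℝ := (1 / 2) * L2sq ρ (fun x => Kop σ μ x - f x)

/-- Bregman divergence D_J^p(μ, ν) = J(μ) − J(ν) − ∫ p d(μ − ν). -/
def DJ {d : ℕ} {Ω : Set (Pd d)} (p : Pd d → ℝ) (μ ν : SignedMeasure ↥Ω) : ℝ :=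
  Jfun μ - Jfun ν - sInt (μ - ν) (fun w => p (w : Pd d))

/-!
The pairing of `L_π φ` with a signed measure `μ` is, by Fubini, the `L²(π)` inner product
of `φ` with `Kμ`; this needs only that `σ(aᵀx + b)` grows at most linearly in `x`, uniformly
on the bounded set `Ω`, and that `π` has a finite second moment. Hence, with `δ = Kν - Kμ†`,
the left side equals `∫ (f - Kν) δ dρ^ε`. Both bounds then follow from `gh ≤ ¼ (g + h)²`:
for the first take `g = f - Kν`, `h = δ`; for the second first replace `f` by `Kν†`, which
changes nothing because `f - Kν†` is orthogonal to the range of `K` in `L²(ρ^ε)`.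
-/

section SignedIntegral

variable {α : Type*} [MeasurableSpace α] {g : α → ℝ}

theorem sInt_eq_sub_of_eq_toSignedMeasure_sub {μ : SignedMeasure α} {P N : Measure α}
    [IsFiniteMeasure P] [IsFiniteMeasure N] (h : μ = P.toSignedMeasure - N.toSignedMeasure)
    (hg : StronglyMeasurable g) (C : ℝ) (hgC : ∀ a, ‖g a‖ ≤ C) :
    sInt μ g = ∫ a, g a ∂P - ∫ a, g a ∂N := by
  set J := μ.toJordanDecomposition
  have hint : ∀ (m : Measure α) [IsFiniteMeasure m], Integrable g m := fun m _ =>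
    .of_bound hg.aestronglyMeasurable C (ae_of_all _ hgC)
  have hJ : J.posPart + N = P + J.negPart := by
    rw [← Measure.toSignedMeasure_eq_toSignedMeasure_iff, Measure.toSignedMeasure_add,
      Measure.toSignedMeasure_add, ← sub_eq_sub_iff_add_eq_add, ← h]
    exact μ.toSignedMeasure_toJordanDecomposition
  have := congrArg (fun m => ∫ a, g a ∂m) hJ
  simp only [integral_add_measure (hint _) (hint _)] at this
  rw [sInt]
  linarith

theorem sInt_sub (μ ν : SignedMeasure α) (hg : StronglyMeasurable g) (C : ℝ)
    (hgC : ∀ a, ‖g a‖ ≤ C) : sInt (μ - ν) g = sInt μ g - sInt ν g := by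
  set Jμ := μ.toJordanDecomposition
  set Jν := ν.toJordanDecomposition
  have hint : ∀ (m : Measure α) [IsFiniteMeasure m], Integrable g m := fun m _ =>
    .of_bound hg.aestronglyMeasurable C (ae_of_all _ hgC)
  have hdecomp : μ - ν = (Jμ.posPart + Jν.negPart).toSignedMeasure -
      (Jμ.negPart + Jν.posPart).toSignedMeasure := by
    rw [Measure.toSignedMeasure_add, Measure.toSignedMeasure_add,
      ← μ.toSignedMeasure_toJordanDecomposition, ← ν.toSignedMeasure_toJordanDecomposition]
    simp only [JordanDecomposition.toSignedMeasure]
    abel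
  rw [sInt_eq_sub_of_eq_toSignedMeasure_sub hdecomp hg C hgC,
    integral_add_measure (hint _) (hint _), integral_add_measure (hint _) (hint _), sInt, sInt]
  ring

end SignedIntegral

theorem memLp_one_add_norm {E : Type*} [NormedAddCommGroup E] [MeasurableSpace E]
    [OpensMeasurableSpace E] {π : Measure E} [IsFiniteMeasure π]
    (h : Integrable (fun x => ‖x‖ ^ 2) π) : MemLp (fun x => 1 + ‖x‖) 2 π :=
  (memLp_const (1 : ℝ)).add <|
    (memLp_two_iff_integrable_sq continuous_norm.aestronglyMeasurable).mpr h

theorem integral_mul_le_quarter_integral_add_sq {α : Type*} [MeasurableSpace α] {μ : Measure α}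
    {g h : α → ℝ} (hg : MemLp g 2 μ) (hh : MemLp h 2 μ) :
    ∫ x, g x * h x ∂μ ≤ 1 / 4 * ∫ x, (g x + h x) ^ 2 ∂μ := by
  rw [← integral_const_mul]
  exact integral_mono (hg.integrable_mul hh) ((hg.add hh).integrable_sq.const_mul _)
    fun x => by nlinarith [sq_nonneg (g x - h x)]

theorem integral_add_mul_le_quarter_of_integral_mul_eq_zero {α : Type*} [MeasurableSpace α]
    {μ : Measure α} {e g h : α → ℝ} (he : MemLp e 2 μ) (hg : MemLp g 2 μ)
    (hh : MemLp h 2 μ) (heh : ∫ x, e x * h x ∂μ = 0) :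
    ∫ x, (e x + g x) * h x ∂μ ≤ 1 / 4 * ∫ x, (g x + h x) ^ 2 ∂μ := by
  simp only [add_mul]
  rw [integral_add (f := fun x => e x * h x) (g := fun x => g x * h x) (he.integrable_mul hh)
    (hg.integrable_mul hh), heh, zero_add]
  exact integral_mul_le_quarter_integral_add_sq hg hh

def neuron {d : ℕ} (σ : ℝ → ℝ) (w : Pd d) (x : Ed d) : ℝ := σ (⟪w.1, x⟫ + w.2)

section Neuron

variable {d : ℕ} {Ω : Set (Pd d)} {σ : ℝ → ℝ}

theorem continuous_neuron (hσ : Continuous σ) :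
    Continuous (fun z : Pd d × Ed d => neuron σ z.1 z.2) :=
  hσ.comp ((continuous_fst.fst.inner continuous_snd).add continuous_fst.snd)

theorem LipschitzWith.exists_abs_neuron_le {L : NNReal} (hσ : LipschitzWith L σ)
    (hΩ : Bornology.IsBounded Ω) :
    ∃ C, ∀ w ∈ Ω, ∀ x, |neuron σ w x| ≤ C * (1 + ‖x‖) := by
  obtain ⟨R, hΩR⟩ := hΩ.exists_norm_le
  refine ⟨|σ 0| + L * R, fun w hw x => ?_⟩
  set t := ⟪w.1, x⟫ + w.2
  have ht : |t| ≤ R * (1 + ‖x‖) :=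
    calc |t| ≤ ‖w.1‖ * ‖x‖ + ‖w.2‖ :=
          (abs_add_le _ _).trans (add_le_add (abs_real_inner_le_norm _ _) le_rfl)
      _ ≤ R * ‖x‖ + R := by
          gcongr
          exacts [(norm_fst_le w).trans (hΩR w hw), (norm_snd_le w).trans (hΩR w hw)]
      _ = R * (1 + ‖x‖) := by ring
  have hlip : |σ t - σ 0| ≤ L * |t| := by simpa [Real.dist_eq] using hσ.dist_le_mul t 0
  have hx : 1 ≤ 1 + ‖x‖ := le_add_of_nonneg_right (norm_nonneg x)
  calc |σ t| ≤ |σ 0| + |σ t - σ 0| := by linarith [abs_sub_abs_le_abs_sub (σ t) (σ 0)]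
    _ ≤ |σ 0| * (1 + ‖x‖) + L * (R * (1 + ‖x‖)) := by
        gcongr
        · exact le_mul_of_one_le_right (abs_nonneg _) hx
        · exact hlip.trans (by gcongr)
    _ = (|σ 0| + L * R) * (1 + ‖x‖) := by ring

variable {π : Measure (Ed d)} {G : Ed d → ℝ}

theorem memLp_integral_neuron (hσ : Continuous σ) (hG : MemLp G 2 π)
    (hb : ∀ w ∈ Ω, ∀ x, |neuron σ w x| ≤ G x) (p : Measure Ω) [IsFiniteMeasure p] :
    MemLp (fun x => ∫ w, neuron σ (w : Pd d) x ∂p) 2 π := by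
  have hcont : Continuous (fun z : Ed d × Ω => neuron σ (z.2 : Pd d) z.1) :=
    (continuous_neuron hσ).comp
      ((continuous_subtype_val.comp continuous_snd).prodMk continuous_fst)
  refine (hG.const_mul (p.real Set.univ)).of_le
    hcont.stronglyMeasurable.integral_prod_right'.aestronglyMeasurable (ae_of_all _ fun x => ?_)
  calc ‖∫ w, neuron σ (w : Pd d) x ∂p‖ ≤ G x * p.real Set.univ :=
        norm_integral_le_of_norm_le_const (ae_of_all _ fun w => hb w w.2 x)
    _ ≤ ‖p.real Set.univ * G x‖ := by rw [mul_comm]; exact le_abs_self _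

theorem memLp_Kop (hσ : Continuous σ) (hG : MemLp G 2 π)
    (hb : ∀ w ∈ Ω, ∀ x, |neuron σ w x| ≤ G x) (μ : SignedMeasure Ω) :
    MemLp (Kop σ μ) 2 π :=
  (memLp_integral_neuron hσ hG hb _).sub (memLp_integral_neuron hσ hG hb _)

theorem Kop_sub (hσ : Continuous σ) (hb : ∀ w ∈ Ω, ∀ x, |neuron σ w x| ≤ G x)
    (μ ν : SignedMeasure Ω) (x : Ed d) : Kop σ (μ - ν) x = Kop σ μ x - Kop σ ν x :=
  sInt_sub μ ν ((continuous_neuron hσ).comp (continuous_subtype_val.prodMk continuous_const)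
    |>.stronglyMeasurable) (G x) fun w => hb w w.2 x

variable [SFinite π] {φ : Ed d → ℝ}

theorem integral_Lop_eq (hσ : Continuous σ) (hG : MemLp G 2 π)
    (hb : ∀ w ∈ Ω, ∀ x, |neuron σ w x| ≤ G x) (hφ : MemLp φ 2 π)
    (p : Measure Ω) [IsFiniteMeasure p] :
    ∫ w, Lop σ π φ w ∂p = ∫ x, φ x * ∫ w, neuron σ (w : Pd d) x ∂p ∂π := by
  have hcont : Continuous (fun z : Ω × Ed d => neuron σ (z.1 : Pd d) z.2) :=
    (continuous_neuron hσ).comp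
      ((continuous_subtype_val.comp continuous_fst).prodMk continuous_snd)
  have hprod : Integrable (fun z : Ω × Ed d => φ z.2 * neuron σ z.1 z.2) (p.prod π) := by
    refine Integrable.mono' ((hφ.norm.integrable_mul hG).comp_snd p)
      (hφ.aestronglyMeasurable.comp_snd.mul hcont.aestronglyMeasurable) (ae_of_all _ fun z => ?_)
    rw [norm_mul, Real.norm_eq_abs]
    exact mul_le_mul_of_nonneg_left (hb z.1 z.1.2 z.2) (abs_nonneg _)
  simp only [← integral_const_mul]
  exact integral_integral_swap hprod

theorem sInt_Lop_eq_integral_mul_Kop (hσ : Continuous σ) (hG : MemLp G 2 π)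
    (hb : ∀ w ∈ Ω, ∀ x, |neuron σ w x| ≤ G x) (hφ : MemLp φ 2 π)
    (μ : SignedMeasure Ω) :
    sInt μ (fun w => Lop σ π φ w) = ∫ x, φ x * Kop σ μ x ∂π := by
  have hint : ∀ (p : Measure Ω) [IsFiniteMeasure p],
      Integrable (fun x => φ x * ∫ w, neuron σ (w : Pd d) x ∂p) π := fun p _ =>
    hφ.integrable_mul (memLp_integral_neuron hσ hG hb p)
  rw [sInt, integral_Lop_eq hσ hG hb hφ, integral_Lop_eq hσ hG hb hφ,
    ← integral_sub (hint _) (hint _)]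
  simp only [Kop, sInt, mul_sub]
  rfl

end Neuron

theorem biased_descent_bound_general
    {d : ℕ} (Ω : Set (Pd d)) (hΩ : IsCompact Ω)
    (ρε : Measure (Ed d)) [IsProbabilityMeasure ρε]
    (hρε2 : Integrable (fun x : Ed d => ‖x‖ ^ 2) ρε)
    (σ : ℝ → ℝ) (Lσ : NNReal) (hσ : LipschitzWith Lσ σ)
    (f : Ed d → ℝ) (hf2' : MemLp f 2 ρε)
    (μdag : SignedMeasure ↥Ω)
    (νdag : SignedMeasure ↥Ω)
    (horthν : ∀ w ∈ Ω, Lop σ ρε (fun x => f x - Kop σ νdag x) w = 0) :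
    ∀ ν : SignedMeasure ↥Ω,
      sInt (ν - μdag) (fun w => Lop σ ρε (fun x => f x - Kop σ ν x) (w : Pd d)) ≤
          1 / 4 * L2sq ρε (fun x => f x - Kop σ μdag x) ∧
        sInt (ν - μdag) (fun w => Lop σ ρε (fun x => f x - Kop σ ν x) (w : Pd d)) ≤
          1 / 4 * L2sq ρε (fun x => Kop σ νdag x - Kop σ μdag x) := by
  intro ν
  obtain ⟨C, hb⟩ := hσ.exists_abs_neuron_le hΩ.isBounded
  have hG := (memLp_one_add_norm hρε2).const_mul C
  have hK : ∀ μ, MemLp (Kop σ μ) 2 ρε := memLp_Kop hσ.continuous hG hb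
  have hres : ∀ μ, MemLp (fun x => f x - Kop σ μ x) 2 ρε := fun μ => hf2'.sub (hK μ)
  have hδ : MemLp (fun x => Kop σ ν x - Kop σ μdag x) 2 ρε := (hK ν).sub (hK μdag)
  have hpair : ∀ φ, MemLp φ 2 ρε → sInt (ν - μdag) (fun w => Lop σ ρε φ w) =
      ∫ x, φ x * (Kop σ ν x - Kop σ μdag x) ∂ρε := fun φ hφ => by
    simp only [sInt_Lop_eq_integral_mul_Kop hσ.continuous hG hb hφ, Kop_sub hσ.continuous hb]
  have horth : ∫ x, (f x - Kop σ νdag x) * (Kop σ ν x - Kop σ μdag x) ∂ρε = 0 := by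
    rw [← hpair _ (hres νdag), sInt]
    simp only [fun w : Ω => horthν w w.2, integral_zero, sub_zero]
  rw [hpair _ (hres ν)]
  constructor
  · simpa only [L2sq, sub_add_sub_cancel] using
      integral_mul_le_quarter_integral_add_sq (hres ν) hδ
  · simpa only [L2sq, Pi.sub_apply, sub_add_sub_cancel] using
      integral_add_mul_le_quarter_of_integral_mul_eq_zero (hres νdag) ((hK νdag).sub (hK ν)) hδ
        horth

/-- For a biased sampling measure ρ^ε, if μ† satisfies the orthogonality
condition for ρ and ν† the orthogonality condition for ρ^ε, then for every ν:
∫_Ω L_{ρ^ε}(f − Kν) d(ν − μ†) ≤ ¼‖f − Kμ†‖²_{L²(ρ^ε)} and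
∫_Ω L_{ρ^ε}(f − Kν) d(ν − μ†) ≤ ¼‖Kν† − Kμ†‖²_{L²(ρ^ε)}. -/
theorem biased_descent_bound
    {d : ℕ} (Ω : Set (Pd d)) (hΩ : IsCompact Ω)
    (ρ : Measure (Ed d)) [IsProbabilityMeasure ρ]
    (hρ2 : Integrable (fun x : Ed d => ‖x‖ ^ 2) ρ)
    (ρε : Measure (Ed d)) [IsProbabilityMeasure ρε]
    (hρε2 : Integrable (fun x : Ed d => ‖x‖ ^ 2) ρε)
    (σ : ℝ → ℝ) (Lσ : NNReal) (hσ : LipschitzWith Lσ σ)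
    (f : Ed d → ℝ) (hfm : Measurable f) (hf2 : MemLp f 2 ρ) (hf2' : MemLp f 2 ρε)
    (μdag : SignedMeasure ↥Ω)
    (horthμ : ∀ w ∈ Ω, Lop σ ρ (fun x => f x - Kop σ μdag x) w = 0)
    (νdag : SignedMeasure ↥Ω)
    (horthν : ∀ w ∈ Ω, Lop σ ρε (fun x => f x - Kop σ νdag x) w = 0) :
    ∀ ν : SignedMeasure ↥Ω,
      sInt (ν - μdag) (fun w => Lop σ ρε (fun x => f x - Kop σ ν x) (w : Pd d)) ≤
          1 / 4 * L2sq ρε (fun x => f x - Kop σ μdag x) ∧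
        sInt (ν - μdag) (fun w => Lop σ ρε (fun x => f x - Kop σ ν x) (w : Pd d)) ≤
          1 / 4 * L2sq ρε (fun x => Kop σ νdag x - Kop σ μdag x) :=
  biased_descent_bound_general Ω hΩ ρε hρε2 σ Lσ hσ f hf2' μdag νdag horthν

end
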